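/- The space K(ℓ₂) of compact operators on the Hilbert space ℓ₂ fails the Dunford–Pettis property; that is, there exist a Banach space Y and a weakly compact bounded linear operator T: K(ℓ₂) → Y which does not map every weakly null sequence to a norm null sequence. -/

import Mathlib

/-!
Evaluation at a unit vector `e₀` maps `K(ℓ₂)` boundedly into `ℓ₂`, which is reflexive (Riesz
representation, applied twice), so by Banach–Alaoglu this evaluation is weakly compact.
An orthonormal sequence `(eₙ)` is weakly null by Bessel's inequality, hence so is its image
`u ↦ ⟪e₀, u⟫ eₙ` under the bounded operator `ℓ₂ → K(ℓ₂)`, `v ↦ ⟪e₀, ·⟫ v`. Yet evaluation at `e₀`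
sends these rank-one operators back to `eₙ`, which all have norm `1`.
-/

open Filter Metric Topology Pointwise NormedSpace
open scoped ENNReal

set_option maxHeartbeats 1000000
set_option synthInstance.maxHeartbeats 400000

noncomputable section

/-- The Hilbert space `ℓ₂` (of real sequences). -/
abbrev ellTwo : Type := lp (fun _ : ℕ => ℝ) 2

/-- The space `K(ℓ₂)` of compact operators on `ℓ₂`, with the operator norm. -/
abbrev KellTwo : Subspace ℝ (ellTwo →L[ℝ] ellTwo) := compactOperator (RingHom.id ℝ) ellTwo ellTwo

open scoped InnerProductSpace

theorem Orthonormal.tendsto_strongDual_apply_zero {𝕜 E : Type*} [RCLike 𝕜] [NormedAddCommGroup E]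
    [InnerProductSpace 𝕜 E] [CompleteSpace E] {v : ℕ → E} (hv : Orthonormal 𝕜 v)
    (f : StrongDual 𝕜 E) : Tendsto (fun n => f (v n)) atTop (𝓝 0) := by
  set y := (InnerProductSpace.toDual 𝕜 E).symm f
  have hf : ∀ n, f (v n) = ⟪y, v n⟫_𝕜 := fun n => InnerProductSpace.toDual_symm_apply.symm
  have hsq : Tendsto (fun n => ‖⟪v n, y⟫_𝕜‖ ^ 2) atTop (𝓝 0) :=
    (hv.inner_products_summable (x := y)).tendsto_atTop_zero
  have hnorm : Tendsto (fun n => ‖f (v n)‖) atTop (𝓝 0) := by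
    simpa [hf, norm_inner_symm y, Real.sqrt_sq (norm_nonneg _)] using hsq.sqrt
  exact tendsto_zero_iff_norm_tendsto_zero.mpr hnorm

namespace InnerProductSpace

variable {E : Type*} [NormedAddCommGroup E] [InnerProductSpace ℝ E] [CompleteSpace E]

theorem inclusionInDoubleDual_surjective : Function.Surjective (inclusionInDoubleDual ℝ E) := by
  intro φ
  refine ⟨(toDual ℝ E).symm (φ.comp (toDual ℝ E).toContinuousLinearEquiv.toContinuousLinearMap), ?_⟩
  ext f
  obtain ⟨z, rfl⟩ := (toDual ℝ E).surjective f
  simp only [dual_def, toDual_apply_apply]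
  rw [real_inner_comm, toDual_symm_apply]
  rfl

theorem isCompact_closure_of_isBounded (S : Set (WeakSpace ℝ E))
    (hS : Bornology.IsBounded (toWeakSpace ℝ E ⁻¹' S)) : IsCompact (closure S) := by
  refine NormedSpace.isCompact_closure_of_isBounded ℝ E S hS fun ψ _ => ?_
  obtain ⟨y, hy⟩ := inclusionInDoubleDual_surjective (E := E) (WeakDual.toStrongDual ψ)
  exact ⟨toWeakSpace ℝ E y, ContinuousLinearMap.ext fun f => DFunLike.congr_fun hy f⟩

end InnerProductSpace

section SmulRight

variable {𝕜 E F : Type*} [NontriviallyNormedField 𝕜] [LocallyCompactSpace 𝕜]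
  [NormedAddCommGroup E] [NormedSpace 𝕜 E] [NormedAddCommGroup F] [NormedSpace 𝕜 F]

theorem isCompactOperator_smulRight (g : StrongDual 𝕜 E) (v : F) :
    IsCompactOperator (g.smulRight v) := by
  have h : ⇑(g.smulRight v) = ContinuousLinearMap.smulRight (1 : 𝕜 →L[𝕜] 𝕜) v ∘ g := by
    funext u
    simp
  exact h ▸ (isCompactOperator_of_locallyCompactSpace_dom g).clm_comp _

def smulRightCompactL (g : StrongDual 𝕜 E) : F →L[𝕜] compactOperator (RingHom.id 𝕜) E F :=
  (ContinuousLinearMap.smulRightL 𝕜 E F g).codRestrict _ (isCompactOperator_smulRight g)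

@[simp]
theorem smulRightCompactL_apply_apply (g : StrongDual 𝕜 E) (v : F) (u : E) :
    (smulRightCompactL g v : E →L[𝕜] F) u = g u • v :=
  rfl

end SmulRight

theorem KellTwo_fails_dunfordPettis :
    ¬ ∀ (Y : Type) (_ : NormedAddCommGroup Y), ∀ (_ : NormedSpace ℝ Y) (_ : CompleteSpace Y),
        ∀ T : KellTwo →L[ℝ] Y,
          IsCompact (closure (show Set (WeakSpace ℝ Y) from ⇑T '' Metric.closedBall 0 1)) →
          ∀ x : ℕ → KellTwo,
            (∀ f : StrongDual ℝ KellTwo, Tendsto (fun n => f (x n)) atTop (𝓝 0)) →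
            Tendsto (fun n => ‖T (x n)‖) atTop (𝓝 0) := by
  intro hDP
  let e : HilbertBasis ℕ ℝ ellTwo := default
  let T : KellTwo →L[ℝ] ellTwo := (ContinuousLinearMap.apply ℝ ellTwo (e 0)).comp KellTwo.subtypeL
  let x : ℕ → KellTwo := fun n => smulRightCompactL (innerSL ℝ (e 0)) (e n)
  have hT_image : T '' closedBall 0 1 ⊆ closedBall 0 1 := by
    rintro - ⟨B, hB, rfl⟩
    simpa [T, e.orthonormal.1 0] using
      (B : ellTwo →L[ℝ] ellTwo).le_of_opNorm_le (mem_closedBall_zero_iff.mp hB) (e 0)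
  have hT_weaklyCompact : IsCompact (closure (show Set (WeakSpace ℝ ellTwo) from
      ⇑T '' closedBall 0 1)) :=
    InnerProductSpace.isCompact_closure_of_isBounded _ (isBounded_closedBall.subset hT_image)
  have hx_weaklyNull : ∀ f : StrongDual ℝ KellTwo, Tendsto (fun n => f (x n)) atTop (𝓝 0) :=
    fun f => e.orthonormal.tendsto_strongDual_apply_zero (f.comp (smulRightCompactL _))
  have hTx : ∀ n, ‖T (x n)‖ = 1 := fun n => by
    simp [T, x, e.orthonormal.1]
  have hDP_Tx := hDP ellTwo inferInstance inferInstance inferInstance T hT_weaklyCompact x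
    hx_weaklyNull
  simp only [hTx] at hDP_Tx
  exact one_ne_zero (tendsto_nhds_unique tendsto_const_nhds hDP_Tx)
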